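/- Let Y = Gr(2,5) ∩ {p_{12} = p_{03}}. For every point y ∈ P^4 other than y_0 = [0:0:0:0:1], there is exactly one σ_{3,1}-plane contained in Y with vertex y; for y = y_0, the σ_{3,1}-planes in Y with vertex y_0 form a P^3 (the dual space of planes in {x_4 = 0}). Hence the Fano variety of σ_{3,1}-planes in Y is the blow-up of P^4 at the point y_0. -/

import Mathlib

/-- The skew form on `ℂ⁵` corresponding to the Plücker hyperplane `p₁₂ - p₀₃ = 0`. -/
def Om (a b : Fin 5 → ℂ) : ℂ :=
  (a 1 * b 2 - a 2 * b 1) - (a 0 * b 3 - a 3 * b 0)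

/-- Total isotropy of a subspace. -/
def IsIsotropic (f : (Fin 5 → ℂ) → (Fin 5 → ℂ) → ℂ) (W : Submodule ℂ (Fin 5 → ℂ)) : Prop :=
  ∀ a ∈ W, ∀ b ∈ W, f a b = 0

/-- The `σ_{3,1}`-planes with vertex `P(V₁)` contained in `Y = Gr(2,5) ∩ {p₁₂ = p₀₃}`,
recorded by their 4-space `V₄`: the plane of lines through `P(V₁)` inside `P(V₄)` lies
in `Y` iff every 2-plane `W` with `V₁ ≤ W ≤ V₄` satisfies the Plücker relation. -/
def VertexPlanes (V₁ : Submodule ℂ (Fin 5 → ℂ)) : Set (Submodule ℂ (Fin 5 → ℂ)) :=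
  {V₄ | Module.finrank ℂ V₄ = 4 ∧ V₁ ≤ V₄ ∧
    ∀ W : Submodule ℂ (Fin 5 → ℂ), V₁ ≤ W → W ≤ V₄ → Module.finrank ℂ W = 2 →
      IsIsotropic Om W}

/-- The distinguished point `y₀ = [0:0:0:0:1] ∈ ℙ⁴`. -/
noncomputable def y0 : Submodule ℂ (Fin 5 → ℂ) :=
  Submodule.span ℂ {Pi.single 4 1}

namespace Stmt11Aux

open Module Submodule

/-- `Om` as a bilinear form. -/
noncomputable def B : LinearMap.BilinForm ℂ (Fin 5 → ℂ) :=
  LinearMap.mk₂ ℂ Om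
    (fun a a' b => by simp [Om]; ring)
    (fun c a b => by simp [Om]; ring)
    (fun a b b' => by simp [Om]; ring)
    (fun c a b => by simp [Om]; ring)

lemma B_apply (a b : Fin 5 → ℂ) : B a b = Om a b := rfl

lemma Om_skew (a b : Fin 5 → ℂ) : Om a b = - Om b a := by simp [Om]; ring

lemma Om_self (a : Fin 5 → ℂ) : Om a a = 0 := by simp [Om]; ring

lemma B_refl : B.IsRefl := fun a b h => by
  rw [B_apply] at h ⊢; rw [Om_skew, h, neg_zero]

/-- The fifth basis vector. -/
noncomputable def e4 : Fin 5 → ℂ := Pi.single 4 1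

lemma e4_ne_zero : e4 ≠ 0 := by
  intro h
  have := congrFun h 4
  simp [e4] at this

lemma y0_def : y0 = Submodule.span ℂ {e4} := rfl

lemma finrank_y0 : Module.finrank ℂ y0 = 1 := finrank_span_singleton e4_ne_zero

lemma Om_e4_right (a : Fin 5 → ℂ) : Om a e4 = 0 := by
  simp [Om, e4, Pi.single_apply]

lemma Om_e4_left (b : Fin 5 → ℂ) : Om e4 b = 0 := by
  simp [Om, e4, Pi.single_apply]

lemma y0_le_orth (S : Submodule ℂ (Fin 5 → ℂ)) : y0 ≤ B.orthogonal S := by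
  rw [y0_def, Submodule.span_le, Set.singleton_subset_iff]
  intro n _
  show B n e4 = 0
  rw [B_apply]; exact Om_e4_right n

lemma orth_y0 : B.orthogonal y0 = ⊤ := by
  rw [eq_top_iff]
  intro m _ n hn
  rw [y0_def, Submodule.mem_span_singleton] at hn
  obtain ⟨c, rfl⟩ := hn
  show B (c • e4) m = 0
  rw [map_smul]
  simp only [LinearMap.smul_apply, smul_eq_mul]
  rw [B_apply, Om_e4_left, mul_zero]

lemma rad_eq : B.orthogonal ⊤ = y0 := by
  ext m
  simp only [LinearMap.BilinForm.mem_orthogonal_iff, Submodule.mem_top, forall_true_left]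
  constructor
  · intro h
    have h0 := h (Pi.single 0 1)
    have h1 := h (Pi.single 1 1)
    have h2 := h (Pi.single 2 1)
    have h3 := h (Pi.single 3 1)
    rw [B_apply] at h0 h1 h2 h3
    simp [Om, Pi.single_apply] at h0 h1 h2 h3
    rw [y0_def, Submodule.mem_span_singleton]
    refine ⟨m 4, ?_⟩
    funext j
    fin_cases j <;>
      simp [e4, Pi.single_apply, h0, h1, h2, h3]
  · intro hm n
    rw [y0_def, Submodule.mem_span_singleton] at hm
    obtain ⟨c, rfl⟩ := hm
    rw [map_smul]
    simp only [smul_eq_mul]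
    rw [B_apply, Om_e4_right, mul_zero]

lemma finrank_fin5 : Module.finrank ℂ (Fin 5 → ℂ) = 5 := by simp

lemma orth_finrank (S : Submodule ℂ (Fin 5 → ℂ)) (h : y0 ≤ S) :
    Module.finrank ℂ S + Module.finrank ℂ (B.orthogonal S) = 6 := by
  have hf := LinearMap.BilinForm.finrank_add_finrank_orthogonal B_refl S
  rw [rad_eq, inf_eq_right.mpr h, finrank_y0, finrank_fin5] at hf
  omega

lemma double_orth (S : Submodule ℂ (Fin 5 → ℂ)) (h : y0 ≤ S) :
    B.orthogonal (B.orthogonal S) = S := by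
  have h1 := orth_finrank S h
  have h2 := orth_finrank _ (y0_le_orth S)
  exact (Submodule.eq_of_le_of_finrank_le
    (LinearMap.BilinForm.le_orthogonal_orthogonal B_refl) (by omega)).symm

lemma exists_gen (V : Submodule ℂ (Fin 5 → ℂ)) (h : Module.finrank ℂ V = 1) :
    ∃ v, V = Submodule.span ℂ {v} := by
  have hb : V ≠ ⊥ := by
    intro hb; rw [hb] at h; simp at h
  obtain ⟨v, hv, hv0⟩ := Submodule.exists_mem_ne_zero_of_ne_bot hb
  refine ⟨v, (Submodule.eq_of_le_of_finrank_le ?_ ?_).symm⟩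
  · rwa [Submodule.span_le, Set.singleton_subset_iff]
  · rw [h, finrank_span_singleton hv0]

lemma iso_rank1 (V : Submodule ℂ (Fin 5 → ℂ)) (h : Module.finrank ℂ V = 1) :
    IsIsotropic Om V := by
  obtain ⟨v, rfl⟩ := exists_gen V h
  intro a ha b hb
  rw [Submodule.mem_span_singleton] at ha hb
  obtain ⟨s, rfl⟩ := ha
  obtain ⟨t, rfl⟩ := hb
  simp [Om]; ring

lemma Om_expand (p s q t : ℂ) (v w : Fin 5 → ℂ) :
    Om (p • v + s • w) (q • v + t • w)
      = p * q * Om v v + p * t * Om v w + s * q * Om w v + s * t * Om w w := by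
  simp [Om]; ring

lemma key_iso (V₁ W : Submodule ℂ (Fin 5 → ℂ)) (h1 : Module.finrank ℂ V₁ = 1)
    (hle : V₁ ≤ W) (h2 : Module.finrank ℂ W = 2) (horth : W ≤ B.orthogonal V₁) :
    IsIsotropic Om W := by
  obtain ⟨v, hv⟩ := exists_gen V₁ h1
  have hvV : v ∈ V₁ := by rw [hv]; exact Submodule.mem_span_singleton_self v
  obtain ⟨w, hwW, hwV⟩ : ∃ w ∈ W, w ∉ V₁ := by
    by_contra hc
    push_neg at hc
    have hWle : W ≤ V₁ := hc
    have := Submodule.finrank_mono hWle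
    omega
  have hsub : V₁ ⊔ Submodule.span ℂ {w} ≤ W :=
    sup_le hle (by rwa [Submodule.span_le, Set.singleton_subset_iff])
  have hWeq : W = V₁ ⊔ Submodule.span ℂ {w} := by
    refine (Submodule.eq_of_le_of_finrank_le hsub ?_).symm
    have hlt : V₁ < V₁ ⊔ Submodule.span ℂ {w} := by
      refine lt_of_le_of_ne le_sup_left (fun he => hwV ?_)
      rw [he]
      exact Submodule.mem_sup_right (Submodule.mem_span_singleton_self w)
    have := Submodule.finrank_lt_finrank_of_lt hlt
    omega
  have hvw : Om v w = 0 := by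
    have := horth hwW v hvV
    rwa [B_apply] at this
  have hwv : Om w v = 0 := by rw [Om_skew, hvw, neg_zero]
  intro a ha b hb
  rw [hWeq, Submodule.mem_sup] at ha hb
  obtain ⟨a1, ha1, a2, ha2, rfl⟩ := ha
  obtain ⟨b1, hb1, b2, hb2, rfl⟩ := hb
  rw [hv, Submodule.mem_span_singleton] at ha1 hb1
  rw [Submodule.mem_span_singleton] at ha2 hb2
  obtain ⟨p, rfl⟩ := ha1
  obtain ⟨s, rfl⟩ := ha2
  obtain ⟨q, rfl⟩ := hb1
  obtain ⟨t, rfl⟩ := hb2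
  rw [Om_expand, hvw, hwv, Om_self, Om_self]
  ring

lemma mem_vp_iff (V₁ V₄ : Submodule ℂ (Fin 5 → ℂ)) (h1 : Module.finrank ℂ V₁ = 1) :
    V₄ ∈ VertexPlanes V₁ ↔
      Module.finrank ℂ V₄ = 4 ∧ V₁ ≤ V₄ ∧ V₄ ≤ B.orthogonal V₁ := by
  constructor
  · rintro ⟨hf, hle, hW⟩
    refine ⟨hf, hle, fun w hw => ?_⟩
    intro n hn
    rw [B_apply]
    by_cases hwV : w ∈ V₁
    · exact iso_rank1 V₁ h1 n hn w hwV
    · have hw0 : w ≠ 0 := fun h => hwV (h ▸ V₁.zero_mem)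
      have hsub : V₁ ⊔ Submodule.span ℂ {w} ≤ V₄ :=
        sup_le hle (by rwa [Submodule.span_le, Set.singleton_subset_iff])
      have hfr : Module.finrank ℂ ↥(V₁ ⊔ Submodule.span ℂ {w}) = 2 := by
        have hlt : V₁ < V₁ ⊔ Submodule.span ℂ {w} := by
          refine lt_of_le_of_ne le_sup_left (fun he => hwV ?_)
          rw [he]
          exact Submodule.mem_sup_right (Submodule.mem_span_singleton_self w)
        have hl := Submodule.finrank_lt_finrank_of_lt hlt
        have hs := Submodule.finrank_sup_add_finrank_inf_eq V₁ (Submodule.span ℂ {w})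
        rw [finrank_span_singleton hw0] at hs
        omega
      exact hW _ le_sup_left hsub hfr n (Submodule.mem_sup_left hn) w
        (Submodule.mem_sup_right (Submodule.mem_span_singleton_self w))
  · rintro ⟨hf, hle, ho⟩
    exact ⟨hf, hle, fun W hVW hWV hW2 => key_iso V₁ W h1 hVW hW2 (hWV.trans ho)⟩

lemma finrank_orth_line (V₁ : Submodule ℂ (Fin 5 → ℂ)) (h1 : Module.finrank ℂ V₁ = 1)
    (hne : V₁ ≠ y0) : Module.finrank ℂ (B.orthogonal V₁) = 4 := by
  have hf := LinearMap.BilinForm.finrank_add_finrank_orthogonal B_refl V₁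
  rw [rad_eq, finrank_fin5] at hf
  have hinf : V₁ ⊓ y0 = ⊥ := by
    rw [eq_bot_iff]
    intro x hx
    obtain ⟨hx1, hx2⟩ := Submodule.mem_inf.mp hx
    rw [Submodule.mem_bot]
    by_contra hx0
    have e1 : Submodule.span ℂ {x} = V₁ :=
      Submodule.eq_of_le_of_finrank_le
        (by rwa [Submodule.span_le, Set.singleton_subset_iff])
        (by rw [h1, finrank_span_singleton hx0])
    have e2 : Submodule.span ℂ {x} = y0 :=
      Submodule.eq_of_le_of_finrank_le
        (by rwa [Submodule.span_le, Set.singleton_subset_iff])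
        (by rw [finrank_y0, finrank_span_singleton hx0])
    exact hne (e1.symm.trans e2)
  rw [hinf] at hf
  simp only [finrank_bot] at hf
  omega

lemma part1 (V₁ : Submodule ℂ (Fin 5 → ℂ)) (h1 : Module.finrank ℂ V₁ = 1)
    (hne : V₁ ≠ y0) : ∃! V₄, V₄ ∈ VertexPlanes V₁ := by
  have hfo := finrank_orth_line V₁ h1 hne
  refine ⟨B.orthogonal V₁, ?_, ?_⟩
  · show B.orthogonal V₁ ∈ VertexPlanes V₁
    rw [mem_vp_iff _ _ h1]
    refine ⟨hfo, ?_, le_rfl⟩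
    intro m hm n hn
    rw [B_apply]
    exact iso_rank1 V₁ h1 n hn m hm
  · intro V₄ hV₄
    have hV₄' : V₄ ∈ VertexPlanes V₁ := hV₄
    rw [mem_vp_iff _ _ h1] at hV₄'
    exact Submodule.eq_of_le_of_finrank_le hV₄'.2.2 (by rw [hfo, hV₄'.1])

lemma part2 : VertexPlanes y0
    = {V₄ : Submodule ℂ (Fin 5 → ℂ) | Module.finrank ℂ V₄ = 4 ∧ y0 ≤ V₄} := by
  ext V₄
  rw [Set.mem_setOf_eq, mem_vp_iff _ _ finrank_y0]
  constructor
  · rintro ⟨a, b, _⟩; exact ⟨a, b⟩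
  · rintro ⟨a, b⟩; exact ⟨a, b, by rw [orth_y0]; exact le_top⟩

/-- Restriction to the first four coordinates. -/
noncomputable def g : (Fin 5 → ℂ) →ₗ[ℂ] (Fin 4 → ℂ) :=
  LinearMap.funLeft ℂ ℂ Fin.castSucc

lemma g_surj : Function.Surjective g :=
  LinearMap.funLeft_surjective_of_injective ℂ ℂ _ (Fin.castSucc_injective 4)

lemma ker_g : LinearMap.ker g = y0 := by
  ext x
  simp only [LinearMap.mem_ker]
  constructor
  · intro hx
    have h : ∀ i : Fin 4, x (Fin.castSucc i) = 0 := fun i => congrFun hx i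
    have h0 : x 0 = 0 := h 0
    have h1 : x 1 = 0 := h 1
    have h2 : x 2 = 0 := h 2
    have h3 : x 3 = 0 := h 3
    rw [y0_def, Submodule.mem_span_singleton]
    refine ⟨x 4, ?_⟩
    funext j
    fin_cases j <;> simp [e4, Pi.single_apply, h0, h1, h2, h3]
  · intro hx
    rw [y0_def, Submodule.mem_span_singleton] at hx
    obtain ⟨c, rfl⟩ := hx
    funext i
    show (c • e4) (Fin.castSucc i) = 0
    fin_cases i <;> simp [e4, Pi.single_apply, Fin.ext_iff] <;>
      exact fun h => absurd h (by decide)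

set_option synthInstance.maxHeartbeats 1000000 in
lemma finrank_map_g (V : Submodule ℂ (Fin 5 → ℂ)) (h : y0 ≤ V) :
    Module.finrank ℂ (Submodule.map g V) + 1 = Module.finrank ℂ V := by
  have hr := LinearMap.finrank_range_add_finrank_ker (g.comp V.subtype)
  rw [LinearMap.range_comp, Submodule.range_subtype, LinearMap.ker_comp, ker_g] at hr
  have hc : Module.finrank ℂ (Submodule.comap V.subtype y0) = 1 := by
    rw [(Submodule.comapSubtypeEquivOfLe h).finrank_eq, finrank_y0]
  rw [hc] at hr
  exact hr

noncomputable def equiv3 : (VertexPlanes y0) ≃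
    {U : Submodule ℂ (Fin 4 → ℂ) // Module.finrank ℂ U = 3} where
  toFun V := ⟨Submodule.map g V.1, by
    obtain ⟨h4, hy⟩ := (Set.ext_iff.mp part2 V.1).mp V.2
    have := finrank_map_g V.1 hy
    omega⟩
  invFun U := ⟨Submodule.comap g U.1, by
    rw [Set.ext_iff.mp part2 (Submodule.comap g U.1)]
    have hker : y0 ≤ Submodule.comap g U.1 := by
      rw [← ker_g]
      intro x hx
      rw [Submodule.mem_comap, LinearMap.mem_ker.mp hx]
      exact U.1.zero_mem
    refine ⟨?_, hker⟩
    have h1 := finrank_map_g _ hker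
    rw [Submodule.map_comap_eq_of_surjective g_surj, U.2] at h1
    omega⟩
  left_inv V := by
    apply Subtype.ext
    have hV := (Set.ext_iff.mp part2 V.1).mp V.2
    show Submodule.comap g (Submodule.map g V.1) = V.1
    rw [Submodule.comap_map_eq, ker_g, sup_eq_left.mpr hV.2]
  right_inv U := Subtype.ext (Submodule.map_comap_eq_of_surjective g_surj U.1)

lemma y0_le_of_mem_vp (V₁ V₄ : Submodule ℂ (Fin 5 → ℂ)) (h1 : Module.finrank ℂ V₁ = 1)
    (hm : V₄ ∈ VertexPlanes V₁) : y0 ≤ V₄ := by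
  rw [mem_vp_iff _ _ h1] at hm
  by_cases hne : V₁ = y0
  · exact hne ▸ hm.2.1
  · have h4 := finrank_orth_line V₁ h1 hne
    have hVeq : V₄ = B.orthogonal V₁ :=
      Submodule.eq_of_le_of_finrank_le hm.2.2 (by rw [h4, hm.1])
    rw [hVeq]
    exact y0_le_orth _

noncomputable def equiv4 : {p : Submodule ℂ (Fin 5 → ℂ) × Submodule ℂ (Fin 5 → ℂ) //
      Module.finrank ℂ p.1 = 1 ∧ p.2 ∈ VertexPlanes p.1}
    ≃ {q : Submodule ℂ (Fin 5 → ℂ) × Submodule ℂ (Fin 5 → ℂ) //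
      Module.finrank ℂ q.1 = 1 ∧ Module.finrank ℂ q.2 = 2 ∧ q.1 ≤ q.2 ∧ y0 ≤ q.2} where
  toFun p := ⟨(p.1.1, B.orthogonal p.1.2), by
    obtain ⟨h1, hm⟩ := p.2
    have hy4 := y0_le_of_mem_vp _ _ h1 hm
    have hfr := orth_finrank _ hy4
    rw [mem_vp_iff _ _ h1] at hm
    obtain ⟨h4, hle, ho⟩ := hm
    refine ⟨h1, ?_, ?_, y0_le_orth _⟩
    · show Module.finrank ℂ ↥(B.orthogonal p.1.2) = 2
      omega
    · show p.1.1 ≤ B.orthogonal p.1.2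
      exact le_trans (LinearMap.BilinForm.le_orthogonal_orthogonal B_refl)
        (LinearMap.BilinForm.orthogonal_le ho)⟩
  invFun q := ⟨(q.1.1, B.orthogonal q.1.2), by
    obtain ⟨h1, h2, hle, hy⟩ := q.2
    refine ⟨h1, ?_⟩
    rw [mem_vp_iff _ _ h1]
    have hfr := orth_finrank _ hy
    have hiso := key_iso y0 q.1.2 finrank_y0 hy h2 (by rw [orth_y0]; exact le_top)
    refine ⟨?_, ?_, LinearMap.BilinForm.orthogonal_le hle⟩
    · show Module.finrank ℂ ↥(B.orthogonal q.1.2) = 4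
      omega
    · intro m hm n hn
      rw [B_apply]
      exact hiso n hn m (hle hm)⟩
  left_inv p := by
    apply Subtype.ext
    obtain ⟨h1, hm⟩ := p.2
    have hy4 := y0_le_of_mem_vp _ _ h1 hm
    exact Prod.ext rfl (double_orth _ hy4)
  right_inv q := by
    apply Subtype.ext
    exact Prod.ext rfl (double_orth _ q.2.2.2.2)

end Stmt11Aux

/-- In `Y = Gr(2,5) ∩ {p₁₂ = p₀₃}`: every point `y ≠ y₀` of `ℙ⁴` is the vertex of a
unique `σ_{3,1}`-plane contained in `Y`, while the `σ_{3,1}`-planes with vertex `y₀`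
form a `ℙ³` (the dual space of planes in `{x₄ = 0}`, i.e. `Gr(3,4)`). Hence the family
of `σ_{3,1}`-planes in `Y` is the blow-up of `ℙ⁴` at `y₀` (pairs of a point and a line
through `y₀` containing it). -/
theorem stmt11 :
    (∀ V₁ : Submodule ℂ (Fin 5 → ℂ), Module.finrank ℂ V₁ = 1 → V₁ ≠ y0 →
      ∃! V₄, V₄ ∈ VertexPlanes V₁) ∧
    (VertexPlanes y0
      = {V₄ : Submodule ℂ (Fin 5 → ℂ) | Module.finrank ℂ V₄ = 4 ∧ y0 ≤ V₄}) ∧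
    Nonempty ((VertexPlanes y0) ≃
      {U : Submodule ℂ (Fin 4 → ℂ) // Module.finrank ℂ U = 3}) ∧
    Nonempty ({p : Submodule ℂ (Fin 5 → ℂ) × Submodule ℂ (Fin 5 → ℂ) //
        Module.finrank ℂ p.1 = 1 ∧ p.2 ∈ VertexPlanes p.1}
      ≃ {q : Submodule ℂ (Fin 5 → ℂ) × Submodule ℂ (Fin 5 → ℂ) //
        Module.finrank ℂ q.1 = 1 ∧ Module.finrank ℂ q.2 = 2 ∧ q.1 ≤ q.2 ∧ y0 ≤ q.2}) :=
  ⟨Stmt11Aux.part1, Stmt11Aux.part2, ⟨Stmt11Aux.equiv3⟩, ⟨Stmt11Aux.equiv4⟩⟩
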